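/- arXiv:2603.17188 — 3 statements merged into one kernel-verified Lean document; each statement's English description precedes it below -/
import Mathlib

section
/- Let A be a finite nonempty alphabet, let (p_n)_{n≥0} be a sequence of probability vectors on A converging pointwise to a probability vector p̄ with p̄(a) > 0 for every a ∈ A. Then for every aperiodic language L ⊆ A*, there exists a real number d such that both μ_{p̄}(L ∩ A^n) → d and μ_{p_n}(L ∩ A^n) → d as n → ∞; that is, the sequential density of L exists in the strong sense and equals the strong density of L with respect to μ_{p̄}. -/
/-! Write `L = φ⁻¹(N)` for a morphism `φ` onto a finite aperiodic monoid `M`. Then the measure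
of `L ∩ A^k` under `μ_q` is the probability that the random walk on `M` that multiplies on the
right by `φ a` with probability `q a` is in `N` after `k` steps, started at `1`. Fix `δ > 0`;
uniformly over the laws `q ≥ δ`, this is a Cauchy sequence in `k`: the mass on transient states
decays geometrically, and on a recurrent class aperiodicity provides loops of all large lengths,
hence a Doeblin minorization which shrinks the range of values geometrically. The uniform limit
is continuous in `q`, so the diagonal sequence `μ_{p_n}(L ∩ A^n)` converges to its value at `p̄`,
which is the limit of `μ_{p̄}(L ∩ A^n)`. -/

open Filter
open scoped Classical

/-- The measure of `L ∩ A^i` under the Bernoulli measure associated with the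
probability vector `p : A → ℝ`. -/
noncomputable def bernoulliLangMeasure {A : Type*} [Fintype A]
    (p : A → ℝ) (L : Set (List A)) (i : ℕ) : ℝ :=
  ∑ w : Fin i → A, if List.ofFn w ∈ L then ∏ j, p (w j) else 0

/-- A language `L ⊆ A*` is aperiodic if it is recognized by a morphism onto some
finite aperiodic monoid, i.e. a finite monoid `M` such that `m ^ n = m ^ (n + 1)`
for some `n ≥ 1` and all `m ∈ M`. -/
def IsAperiodicLang {A : Type} (L : Set (List A)) : Prop :=
  ∃ (M : Type) (_ : Monoid M) (_ : Fintype M) (φ : FreeMonoid A →* M) (N : Set M),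
    (∃ n : ℕ, 1 ≤ n ∧ ∀ m : M, m ^ n = m ^ (n + 1)) ∧
    L = {w : List A | φ (FreeMonoid.ofList w) ∈ N}

open Set Topology
open scoped Matrix

section Recurrence

variable {A M : Type*} [Monoid M] (φ : FreeMonoid A →* M)

def IsRecurrent (m : M) : Prop := ∀ u, ∃ v, m * φ u * φ v = m

def loopLengths (m : M) : AddSubmonoid ℕ where
  carrier := {k | ∃ w : FreeMonoid A, w.length = k ∧ m * φ w = m}
  zero_mem' := ⟨1, rfl, by simp⟩
  add_mem' := by
    rintro _ _ ⟨u, rfl, hu⟩ ⟨v, rfl, hv⟩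
    exact ⟨u * v, FreeMonoid.length_mul u v, by rw [map_mul, ← mul_assoc, hu, hv]⟩

variable {φ}

theorem IsRecurrent.mul_right {m : M} (hm : IsRecurrent φ m) (u : FreeMonoid A) :
    IsRecurrent φ (m * φ u) := by
  intro u'
  obtain ⟨v, hv⟩ := hm (u * u')
  refine ⟨v * u, ?_⟩
  calc m * φ u * φ u' * φ (v * u) = m * φ (u * u') * φ v * φ u := by
        simp only [map_mul, mul_assoc]
    _ = m * φ u := by rw [hv]

variable (φ) in
/-- A word minimizing the number of states reachable from `m * φ w` leads to a state from which
every reachable state can return. -/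
theorem exists_isRecurrent_mul [Fintype M] (m : M) : ∃ w, IsRecurrent φ (m * φ w) := by
  let reachable (x : M) : Finset M := {y | ∃ v, x * φ v = y}
  let w := Function.argmin fun w => (reachable (m * φ w)).card
  refine ⟨w, fun u => ?_⟩
  have hsub : reachable (m * φ w * φ u) ⊆ reachable (m * φ w) := by
    intro y hy
    obtain ⟨v, rfl⟩ := (Finset.mem_filter.1 hy).2
    exact Finset.mem_filter.2 ⟨Finset.mem_univ _, u * v, by simp only [map_mul, mul_assoc]⟩
  have hcard := Function.argmin_le (fun w => (reachable (m * φ w)).card) (w * u)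
  rw [map_mul, ← mul_assoc] at hcard
  have hself : m * φ w ∈ reachable (m * φ w * φ u) := by
    rw [Finset.eq_of_subset_of_card_le hsub hcard]
    exact Finset.mem_filter.2 ⟨Finset.mem_univ _, 1, by simp⟩
  exact (Finset.mem_filter.1 hself).2

variable (φ) in
theorem eventually_exists_length_isRecurrent [Fintype M] [Nonempty A] :
    ∀ᶠ k in atTop, ∀ m : M, ∃ w : FreeMonoid A, w.length = k ∧ IsRecurrent φ (m * φ w) := by
  refine eventually_all.2 fun m => ?_
  obtain ⟨w, hw⟩ := exists_isRecurrent_mul φ m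
  filter_upwards [eventually_ge_atTop w.length] with k hk
  obtain ⟨pad, hpad⟩ := FreeMonoid.length_surjective (α := A) (k - w.length)
  refine ⟨w * pad, by rw [FreeMonoid.length_mul, hpad]; omega, ?_⟩
  simpa only [map_mul, mul_assoc] using hw.mul_right pad

theorem AddSubmonoid.eventually_mem_of_mem_of_succ_mem {S : AddSubmonoid ℕ} {a : ℕ}
    (ha : a ∈ S) (ha' : a + 1 ∈ S) : ∀ᶠ n in atTop, n ∈ S := by
  filter_upwards [eventually_ge_atTop (a * a)] with n hn
  obtain rfl | hpos := Nat.eq_zero_or_pos a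
  · simpa using S.nsmul_mem ha' n
  -- `n = (n / a - n % a) * a + (n % a) * (a + 1)`, where `n % a < a ≤ n / a`
  obtain ⟨c, hc⟩ := Nat.exists_eq_add_of_le
    ((Nat.mod_lt n hpos).trans_le ((Nat.le_div_iff_mul_le hpos).2 hn)).le
  have hdiv := Nat.div_add_mod' n a
  rw [hc] at hdiv
  convert add_mem (S.nsmul_mem ha c) (S.nsmul_mem ha' (n % a)) using 1
  simp only [smul_eq_mul]
  linarith

/-- A return word `r` from `m * φ (of a) ^ n` gives a loop at `m` of length `n + |r|` and, by
aperiodicity, one of length `n + 1 + |r|`. -/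
theorem IsRecurrent.eventually_mem_loopLengths [Nonempty A] {n : ℕ}
    (hap : ∀ x : M, x ^ n = x ^ (n + 1)) {m : M} (hm : IsRecurrent φ m) :
    ∀ᶠ k in atTop, k ∈ loopLengths φ m := by
  obtain ⟨a⟩ := ‹Nonempty A›
  obtain ⟨r, hr⟩ := hm (FreeMonoid.of a ^ n)
  have hlen (k : ℕ) : (FreeMonoid.of a ^ k).length = k := by
    induction k with
    | zero => rfl
    | succ k ih => rw [pow_succ, FreeMonoid.length_mul, ih, FreeMonoid.length_of]
  refine AddSubmonoid.eventually_mem_of_mem_of_succ_mem (a := n + r.length)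
    ⟨FreeMonoid.of a ^ n * r, by rw [FreeMonoid.length_mul, hlen],
      by rw [map_mul, ← mul_assoc, hr]⟩
    ⟨FreeMonoid.of a ^ (n + 1) * r, by rw [FreeMonoid.length_mul, hlen]; omega, ?_⟩
  rw [map_mul, ← mul_assoc, map_pow, ← hap, ← map_pow, hr]

variable (φ) in
theorem eventually_exists_length_mul_eq [Fintype M] [Nonempty A] {n : ℕ}
    (hap : ∀ x : M, x ^ n = x ^ (n + 1)) :
    ∀ᶠ k in atTop, ∀ m, IsRecurrent φ m → ∀ u,
      ∃ w : FreeMonoid A, w.length = k ∧ m * φ u * φ w = m := by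
  have key (p : M × M) : ∀ᶠ k in atTop, IsRecurrent φ p.1 → (∃ u, p.1 * φ u = p.2) →
      ∃ w : FreeMonoid A, w.length = k ∧ p.2 * φ w = p.1 := by
    by_cases h : IsRecurrent φ p.1 ∧ ∃ u, p.1 * φ u = p.2
    · obtain ⟨hm, u, hu⟩ := h
      obtain ⟨r, hr⟩ := hm u
      filter_upwards [(tendsto_sub_atTop_nat r.length).eventually
          (hm.eventually_mem_loopLengths hap), eventually_ge_atTop r.length]
        with k ⟨w, hw, hloop⟩ hk _ _
      exact ⟨r * w, by rw [FreeMonoid.length_mul, hw]; omega,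
        by rw [← hu, map_mul, ← mul_assoc, hr, hloop]⟩
    · exact Eventually.of_forall fun _ hm hu => absurd ⟨hm, hu⟩ h
  filter_upwards [eventually_all.2 key] with k hk m hm u
  exact hk (m, m * φ u) hm ⟨u, rfl⟩

end Recurrence

section TransitionMatrix

variable {A M : Type*} [Fintype A] [Monoid M] [Fintype M] (φ : FreeMonoid A →* M)
  (q : A → ℝ)

noncomputable def transitionMatrix : Matrix M M ℝ :=
  Matrix.of fun m m' => ∑ a, if m * φ (FreeMonoid.of a) = m' then q a else 0

theorem transitionMatrix_pow_apply (k : ℕ) (m m' : M) :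
    (transitionMatrix φ q ^ k) m m' =
      ∑ w : Fin k → A,
        if m * φ (FreeMonoid.ofList (List.ofFn w)) = m' then ∏ i, q (w i) else 0 := by
  induction k generalizing m with
  | zero => simp [Matrix.one_apply]
  | succ k ih =>
    rw [pow_succ', Matrix.mul_apply, ← (Fin.consEquiv fun _ => A).sum_comp,
      Fintype.sum_prod_type]
    simp only [ih]
    simp only [transitionMatrix, Matrix.of_apply, Finset.sum_mul, ite_mul, zero_mul]
    rw [Finset.sum_comm]
    refine Finset.sum_congr rfl fun a _ => ?_
    rw [Finset.sum_ite_eq, if_pos (Finset.mem_univ _), Finset.mul_sum]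
    refine Finset.sum_congr rfl fun w _ => ?_
    simp [Fin.consEquiv, List.ofFn_succ, Fin.prod_univ_succ, FreeMonoid.ofList_cons, mul_assoc,
      mul_ite]

variable {φ q}

theorem transitionMatrix_pow_nonneg (hq : ∀ a, 0 ≤ q a) (k : ℕ) (m m' : M) :
    0 ≤ (transitionMatrix φ q ^ k) m m' := by
  rw [transitionMatrix_pow_apply]
  exact Finset.sum_nonneg fun w _ => by
    split_ifs
    exacts [Finset.prod_nonneg fun i _ => hq (w i), le_rfl]

theorem sum_transitionMatrix_pow_apply (hq : ∑ a, q a = 1) (k : ℕ) (m : M) :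
    ∑ m', (transitionMatrix φ q ^ k) m m' = 1 := by
  simp only [transitionMatrix_pow_apply]
  rw [Finset.sum_comm]
  simp [← Fintype.sum_pow, hq]

theorem exists_mul_eq_of_transitionMatrix_pow_ne_zero {k : ℕ} {m m' : M}
    (h : (transitionMatrix φ q ^ k) m m' ≠ 0) : ∃ u, m * φ u = m' := by
  rw [transitionMatrix_pow_apply] at h
  obtain ⟨w, -, hw⟩ := Finset.exists_ne_zero_of_sum_ne_zero h
  exact ⟨_, (ite_ne_right_iff.1 hw).1⟩

theorem pow_length_le_transitionMatrix_pow {δ : ℝ} (hδ0 : 0 ≤ δ) (hδ : ∀ a, δ ≤ q a)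
    (m : M) (w : FreeMonoid A) :
    δ ^ w.length ≤ (transitionMatrix φ q ^ w.length) m (m * φ w) := by
  rw [transitionMatrix_pow_apply]
  let w' : Fin w.length → A := w.toList.get
  calc δ ^ w.length = ∏ _i : Fin w.length, δ := by simp
    _ ≤ ∏ i, q (w' i) := Finset.prod_le_prod (fun _ _ => hδ0) fun i _ => hδ _
    _ = if m * φ (FreeMonoid.ofList (List.ofFn w')) = m * φ w then ∏ i, q (w' i) else 0 := by
      rw [if_pos]
      show m * φ (FreeMonoid.ofList (List.ofFn w.toList.get)) = m * φ w
      rw [List.ofFn_get, FreeMonoid.ofList_toList]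
    _ ≤ _ := Finset.single_le_sum (f := fun w' : Fin w.length → A =>
          if m * φ (FreeMonoid.ofList (List.ofFn w')) = m * φ w then ∏ i, q (w' i) else 0)
        (fun v _ => by
          split_ifs
          exacts [Finset.prod_nonneg fun i _ => hδ0.trans (hδ _), le_rfl])
        (Finset.mem_univ w')

variable (φ q) in
theorem bernoulliLangMeasure_eq_transitionMatrix_pow_mulVec (N : Set M) (k : ℕ) :
    bernoulliLangMeasure q {w | φ (FreeMonoid.ofList w) ∈ N} k =
      (transitionMatrix φ q ^ k *ᵥ N.indicator 1) 1 := by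
  simp only [Matrix.mulVec, dotProduct, transitionMatrix_pow_apply, one_mul, Finset.sum_mul,
    ite_mul, zero_mul]
  rw [Finset.sum_comm]
  simp [bernoulliLangMeasure, Set.indicator_apply]

end TransitionMatrix

/-- Splitting off the mass `α` that `μ` puts on `r`, the rest is a measure of mass `1 - α`
on `S`. -/
theorem sum_mul_mem_Icc_of_le_apply {ι : Type*} [Fintype ι] {μ g : ι → ℝ} {S : Set ι}
    {r : ι} {α lo D : ℝ} (hμ : ∀ i, 0 ≤ μ i) (hμ1 : ∑ i, μ i = 1) (hμS : ∀ i ∉ S, μ i = 0)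
    (hr : r ∈ S) (hα : α ≤ μ r) (hg : ∀ i ∈ S, g i ∈ Icc lo (lo + D)) :
    ∑ i, μ i * g i ∈
      Icc (α * g r + (1 - α) * lo) (α * g r + (1 - α) * lo + (1 - α) * D) := by
  let ν i := μ i - if i = r then α else 0
  have hν0 (i : ι) : 0 ≤ ν i := by
    by_cases hi : i = r
    · simp [ν, hi, hα]
    · simp [ν, hi, hμ i]
  have hνS (i : ι) (hi : i ∉ S) : ν i = 0 := by
    simp [ν, hμS i hi, show i ≠ r by rintro rfl; exact hi hr]
  have hνg (i : ι) : ν i * lo ≤ ν i * g i ∧ ν i * g i ≤ ν i * (lo + D) := by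
    by_cases hi : i ∈ S
    · exact ⟨mul_le_mul_of_nonneg_left (hg i hi).1 (hν0 i),
        mul_le_mul_of_nonneg_left (hg i hi).2 (hν0 i)⟩
    · simp [hνS i hi]
  have hνsum : ∑ i, ν i = 1 - α := by simp [ν, Finset.sum_sub_distrib, hμ1]
  have hsplit : ∑ i, μ i * g i = α * g r + ∑ i, ν i * g i := by
    simp [ν, sub_mul, Finset.sum_sub_distrib, ite_mul]
  rw [hsplit]
  constructor
  · have := Finset.sum_le_sum fun i (_ : i ∈ Finset.univ) => (hνg i).1
    rw [← Finset.sum_mul, hνsum] at this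
    linarith
  · have := Finset.sum_le_sum fun i (_ : i ∈ Finset.univ) => (hνg i).2
    rw [← Finset.sum_mul, hνsum] at this
    linarith

section Contraction

variable {A M : Type*} [Fintype A] [Monoid M] [Fintype M] {φ : FreeMonoid A →* M}
  {q : A → ℝ}

theorem transitionMatrix_pow_eq_zero_of_closed {S : Set M} (hS : ∀ x ∈ S, ∀ u, x * φ u ∈ S)
    (k : ℕ) {m m' : M} (hm : m ∈ S) (hm' : m' ∉ S) : (transitionMatrix φ q ^ k) m m' = 0 := by
  by_contra h
  obtain ⟨u, rfl⟩ := exists_mul_eq_of_transitionMatrix_pow_ne_zero h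
  exact hm' (hS m hm u)

theorem transitionMatrix_pow_mulVec_mem_Icc_of_le_apply (hq : ∀ a, 0 ≤ q a)
    (hq1 : ∑ a, q a = 1) {S : Set M} (hS : ∀ x ∈ S, ∀ u, x * φ u ∈ S) {k : ℕ} {m r : M}
    (hm : m ∈ S) (hr : r ∈ S)
    {α lo D : ℝ} (hα : α ≤ (transitionMatrix φ q ^ k) m r) {g : M → ℝ}
    (hg : ∀ x ∈ S, g x ∈ Icc lo (lo + D)) :
    (transitionMatrix φ q ^ k *ᵥ g) m ∈
      Icc (α * g r + (1 - α) * lo) (α * g r + (1 - α) * lo + (1 - α) * D) :=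
  sum_mul_mem_Icc_of_le_apply (transitionMatrix_pow_nonneg hq k m)
    (sum_transitionMatrix_pow_apply hq1 k m)
    (fun _ hx => transitionMatrix_pow_eq_zero_of_closed hS k hm hx) hr hα hg

theorem transitionMatrix_pow_mulVec_mem_Icc (hq : ∀ a, 0 ≤ q a) (hq1 : ∑ a, q a = 1)
    {S : Set M} (hS : ∀ x ∈ S, ∀ u, x * φ u ∈ S) (k : ℕ) {m : M} (hm : m ∈ S) {lo hi : ℝ}
    {g : M → ℝ} (hg : ∀ x ∈ S, g x ∈ Icc lo hi) :
    (transitionMatrix φ q ^ k *ᵥ g) m ∈ Icc lo hi := by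
  have h := transitionMatrix_pow_mulVec_mem_Icc_of_le_apply hq hq1 hS hm hm
    (transitionMatrix_pow_nonneg hq k m m) (D := hi - lo) fun x hx => by
      rw [add_sub_cancel]; exact hg x hx
  simpa only [zero_mul, sub_zero, one_mul, zero_add, add_sub_cancel] using h

/-- From every state reachable from `m`, the chain returns to `m` in exactly `K` steps with
probability at least `δ ^ K`, so the range of values on this class shrinks by `1 - δ ^ K`. -/
theorem exists_forall_transitionMatrix_pow_mulVec_mem_Icc {δ : ℝ} (hδ0 : 0 ≤ δ)
    (hδ : ∀ a, δ ≤ q a) (hq1 : ∑ a, q a = 1) {m : M} {K : ℕ}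
    (hK : ∀ u, ∃ w : FreeMonoid A, w.length = K ∧ m * φ u * φ w = m) {v : M → ℝ} {lo D : ℝ}
    (hv : ∀ x, v x ∈ Icc lo (lo + D)) (s : ℕ) :
    ∃ lo', ∀ j ≥ s * K, ∀ u, (transitionMatrix φ q ^ j *ᵥ v) (m * φ u) ∈
      Icc lo' (lo' + (1 - δ ^ K) ^ s * D) := by
  have hq (a : A) : 0 ≤ q a := hδ0.trans (hδ a)
  let S := {x | ∃ u, m * φ u = x}
  have hS : ∀ x ∈ S, ∀ u, x * φ u ∈ S := by
    rintro _ ⟨u, rfl⟩ u'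
    exact ⟨u * u', by rw [map_mul, mul_assoc]⟩
  have hmS : m ∈ S := ⟨1, by rw [map_one, mul_one]⟩
  induction s with
  | zero => exact ⟨lo, fun j _ u => by
      simpa using transitionMatrix_pow_mulVec_mem_Icc hq hq1 hS j ⟨u, rfl⟩ fun x _ => hv x⟩
  | succ s ih =>
    obtain ⟨lo, hlo⟩ := ih
    let g := transitionMatrix φ q ^ (s * K) *ᵥ v
    refine ⟨δ ^ K * g m + (1 - δ ^ K) * lo, fun j hj u => ?_⟩
    have hstep : ∀ x ∈ S, (transitionMatrix φ q ^ K *ᵥ g) x ∈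
        Icc (δ ^ K * g m + (1 - δ ^ K) * lo)
          (δ ^ K * g m + (1 - δ ^ K) * lo + (1 - δ ^ K) ^ (s + 1) * D) := by
      rintro _ ⟨u', rfl⟩
      obtain ⟨w, rfl, hw⟩ := hK u'
      have hα := pow_length_le_transitionMatrix_pow (φ := φ) hδ0 hδ (m * φ u') w
      rw [hw] at hα
      have := transitionMatrix_pow_mulVec_mem_Icc_of_le_apply hq hq1 hS ⟨u', rfl⟩ hmS hα
        (by rintro _ ⟨u'', rfl⟩; exact hlo _ le_rfl u'')
      rwa [pow_succ', mul_assoc]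
    have hj : transitionMatrix φ q ^ j *ᵥ v =
        transitionMatrix φ q ^ (j - (s + 1) * K) *ᵥ (transitionMatrix φ q ^ K *ᵥ g) := by
      rw [Matrix.mulVec_mulVec, Matrix.mulVec_mulVec, ← pow_add, ← pow_add]
      congr 2
      rw [add_mul, one_mul] at hj ⊢
      omega
    rw [hj]
    exact transitionMatrix_pow_mulVec_mem_Icc hq hq1 hS _ ⟨u, rfl⟩ hstep

theorem transitionMatrix_pow_mulVec_indicator_eq_zero_of_isRecurrent (k : ℕ) {m : M}
    (hm : IsRecurrent φ m) :
    (transitionMatrix φ q ^ k *ᵥ {x | ¬IsRecurrent φ x}.indicator 1) m = 0 := by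
  refine Finset.sum_eq_zero fun x _ => ?_
  dsimp only
  by_cases hx : IsRecurrent φ x
  · simp [hx]
  · rw [transitionMatrix_pow_eq_zero_of_closed (S := {x | IsRecurrent φ x})
      (fun x hx u => IsRecurrent.mul_right hx u) k hm hx, zero_mul]

/-- Within `k₀` steps, at least the fraction `δ ^ k₀` of the mass on transient states leaves them
for good. -/
theorem transitionMatrix_pow_mulVec_indicator_le {δ : ℝ} (hδ0 : 0 ≤ δ) (hδ : ∀ a, δ ≤ q a)
    (hq1 : ∑ a, q a = 1) {k₀ : ℕ}
    (hk₀ : ∀ m, ∃ w : FreeMonoid A, w.length = k₀ ∧ IsRecurrent φ (m * φ w)) (s : ℕ) {t : ℕ}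
    (ht : s * k₀ ≤ t) (m : M) :
    (transitionMatrix φ q ^ t *ᵥ {x | ¬IsRecurrent φ x}.indicator 1) m ≤ (1 - δ ^ k₀) ^ s := by
  have hq (a : A) : 0 ≤ q a := hδ0.trans (hδ a)
  have hS : ∀ x ∈ (univ : Set M), ∀ u, x * φ u ∈ univ := fun _ _ _ => mem_univ _
  suffices ∀ s t, s * k₀ ≤ t → ∀ m : M,
      (transitionMatrix φ q ^ t *ᵥ {x | ¬IsRecurrent φ x}.indicator 1) m ∈
        Icc 0 (0 + (1 - δ ^ k₀) ^ s) from by simpa using (this s t ht m).2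
  intro s
  induction s with
  | zero =>
    intro t _ m
    simpa using transitionMatrix_pow_mulVec_mem_Icc hq hq1 hS t (mem_univ m) (lo := 0) (hi := 1)
      fun x _ => by by_cases hx : IsRecurrent φ x <;> simp [hx]
  | succ s ih =>
    intro t ht m
    obtain ⟨w, rfl, hw⟩ := hk₀ m
    have hsplit : t = w.length + (t - w.length) := by rw [add_mul, one_mul] at ht; omega
    rw [hsplit, pow_add (transitionMatrix φ q), ← Matrix.mulVec_mulVec]
    have := transitionMatrix_pow_mulVec_mem_Icc_of_le_apply hq hq1 hS (mem_univ m) (mem_univ _)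
      (pow_length_le_transitionMatrix_pow hδ0 hδ m w)
      fun x _ => ih (t - w.length) (by rw [add_mul, one_mul] at ht; omega) x
    rw [transitionMatrix_pow_mulVec_indicator_eq_zero_of_isRecurrent _ hw] at this
    simpa [pow_succ'] using this

end Contraction

section Density

variable {A M : Type*} [Fintype A] [Nonempty A] [Monoid M] [Fintype M]
  {φ : FreeMonoid A →* M}

theorem abs_transitionMatrix_pow_mulVec_sub_le {q : A → ℝ} {δ : ℝ} (hδ0 : 0 ≤ δ)
    (hδ : ∀ a, δ ≤ q a) (hq1 : ∑ a, q a = 1) {k₀ K : ℕ}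
    (hk₀ : ∀ m, ∃ w : FreeMonoid A, w.length = k₀ ∧ IsRecurrent φ (m * φ w))
    (hK : ∀ m, IsRecurrent φ m → ∀ u, ∃ w : FreeMonoid A, w.length = K ∧ m * φ u * φ w = m)
    {v : M → ℝ} (hv : ∀ x, v x ∈ Icc 0 1) {s t j j' : ℕ} (hj : t * k₀ + s * K ≤ j)
    (hj' : t * k₀ + s * K ≤ j') (m : M) :
    |(transitionMatrix φ q ^ j *ᵥ v) m - (transitionMatrix φ q ^ j' *ᵥ v) m| ≤
      (1 - δ ^ K) ^ s + (1 - δ ^ k₀) ^ t := by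
  have hq (a : A) : 0 ≤ q a := hδ0.trans (hδ a)
  have hδ1 : δ ≤ 1 := by
    obtain ⟨a⟩ := ‹Nonempty A›
    exact (hδ a).trans (hq1 ▸ Finset.single_le_sum (fun b _ => hq b) (Finset.mem_univ a))
  have hcs : 0 ≤ (1 - δ ^ K) ^ s := pow_nonneg (sub_nonneg.2 (pow_le_one₀ hδ0 hδ1)) s
  let P := transitionMatrix φ q
  let T := {x | ¬IsRecurrent φ x}
  have hclose (y : M) : |(P ^ (j - t * k₀) *ᵥ v) y - (P ^ (j' - t * k₀) *ᵥ v) y| ≤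
      (1 - δ ^ K) ^ s + T.indicator 1 y := by
    by_cases hy : IsRecurrent φ y
    · obtain ⟨lo, hlo⟩ := exists_forall_transitionMatrix_pow_mulVec_mem_Icc hδ0 hδ hq1
        (hK y hy) (lo := 0) (D := 1) (by simpa using hv) s
      have h1 := hlo (j - t * k₀) (by omega) 1
      have h2 := hlo (j' - t * k₀) (by omega) 1
      rw [map_one, mul_one, mul_one] at h1 h2
      rw [indicator_of_notMem (show y ∉ T from fun h => h hy), add_zero, abs_le]
      constructor <;> linarith [h1.1, h1.2, h2.1, h2.2]
    · have hS : ∀ x ∈ (univ : Set M), ∀ u, x * φ u ∈ univ := fun _ _ _ => mem_univ _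
      have h1 := transitionMatrix_pow_mulVec_mem_Icc hq hq1 hS (j - t * k₀) (mem_univ y)
        fun x _ => hv x
      have h2 := transitionMatrix_pow_mulVec_mem_Icc hq hq1 hS (j' - t * k₀) (mem_univ y)
        fun x _ => hv x
      rw [indicator_of_mem (show y ∈ T from hy), Pi.one_apply, abs_le]
      constructor <;> linarith [h1.1, h1.2, h2.1, h2.2]
  have hsplit (i : ℕ) (hi : t * k₀ ≤ i) :
      P ^ i *ᵥ v = P ^ (t * k₀) *ᵥ (P ^ (i - t * k₀) *ᵥ v) := by
    rw [Matrix.mulVec_mulVec, ← pow_add, Nat.add_sub_cancel' hi]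
  rw [hsplit j (by omega), hsplit j' (by omega)]
  calc _ = |∑ y, (P ^ (t * k₀)) m y *
          ((P ^ (j - t * k₀) *ᵥ v) y - (P ^ (j' - t * k₀) *ᵥ v) y)| := by
        simp only [Matrix.mulVec, dotProduct, mul_sub, Finset.sum_sub_distrib]
    _ ≤ ∑ y, (P ^ (t * k₀)) m y * ((1 - δ ^ K) ^ s + T.indicator 1 y) := by
        refine (Finset.abs_sum_le_sum_abs _ _).trans (Finset.sum_le_sum fun y _ => ?_)
        rw [abs_mul, abs_of_nonneg (transitionMatrix_pow_nonneg hq _ m y)]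
        exact mul_le_mul_of_nonneg_left (hclose y) (transitionMatrix_pow_nonneg hq _ m y)
    _ = (1 - δ ^ K) ^ s + (P ^ (t * k₀) *ᵥ T.indicator 1) m := by
        have hrow : ∑ y, (P ^ (t * k₀)) m y = 1 := sum_transitionMatrix_pow_apply hq1 _ m
        simp only [Matrix.mulVec, dotProduct, mul_add, Finset.sum_add_distrib, ← Finset.sum_mul,
          hrow, one_mul]
    _ ≤ (1 - δ ^ K) ^ s + (1 - δ ^ k₀) ^ t := by
        gcongr
        exact transitionMatrix_pow_mulVec_indicator_le hδ0 hδ hq1 hk₀ t le_rfl m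

theorem uniformCauchySeqOn_transitionMatrix_pow_mulVec {n : ℕ}
    (hap : ∀ x : M, x ^ n = x ^ (n + 1)) {δ : ℝ} (hδ : 0 < δ) {v : M → ℝ}
    (hv : ∀ x, v x ∈ Icc 0 1) (m : M) :
    UniformCauchySeqOn (fun j q => (transitionMatrix φ q ^ j *ᵥ v) m) atTop
      {q | (∀ a, δ ≤ q a) ∧ ∑ a, q a = 1} := by
  refine Metric.uniformCauchySeqOn_iff.2 fun ε hε => ?_
  obtain ⟨k₀, hk₀⟩ := (eventually_exists_length_isRecurrent φ).exists
  obtain ⟨K, hK⟩ := (eventually_exists_length_mul_eq φ hap).exists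
  obtain ⟨s, hs⟩ := exists_pow_lt_of_lt_one (half_pos hε) (sub_lt_self 1 (pow_pos hδ K))
  obtain ⟨t, ht⟩ := exists_pow_lt_of_lt_one (half_pos hε) (sub_lt_self 1 (pow_pos hδ k₀))
  refine ⟨t * k₀ + s * K, fun j hj j' hj' q ⟨hδq, hq1⟩ => ?_⟩
  rw [Real.dist_eq]
  linarith [abs_transitionMatrix_pow_mulVec_sub_le hδ.le hδq hq1 hk₀ hK hv hj hj' m]

end Density

theorem continuous_bernoulliLangMeasure {A : Type*} [Fintype A] (L : Set (List A)) (k : ℕ) :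
    Continuous fun q : A → ℝ => bernoulliLangMeasure q L k :=
  continuous_finsetSum _ fun w _ => by
    split_ifs
    exacts [continuous_finsetProd _ fun i _ => continuous_apply _, continuous_const]

theorem UniformCauchySeqOn.exists_tendsto_and_tendsto_comp {X β : Type*} [TopologicalSpace X]
    [UniformSpace β] [CompleteSpace β] {F : ℕ → X → β} {s : Set X}
    (hF : UniformCauchySeqOn F atTop s) (hFc : ∀ j, ContinuousOn (F j) s) {x₀ : X}
    (hx₀ : x₀ ∈ s) {x : ℕ → X} (hx : Tendsto x atTop (𝓝[s] x₀)) :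
    ∃ d, Tendsto (fun j => F j x₀) atTop (𝓝 d) ∧ Tendsto (fun n => F n (x n)) atTop (𝓝 d) := by
  have : Nonempty β := ⟨F 0 x₀⟩
  have hlim : ∀ y ∈ s, Tendsto (fun j => F j y) atTop (𝓝 (limUnder atTop fun j => F j y)) :=
    fun y hy => (hF.cauchySeq hy).tendsto_limUnder
  have hunif := hF.tendstoUniformlyOn_of_tendsto hlim
  exact ⟨_, hlim x₀ hx₀,
    hunif.tendsto_comp (hunif.continuousOn (Frequently.of_forall hFc) x₀ hx₀) hx⟩

theorem strongSequentialDensity_of_bernoulli_tendsto_positive_of_aperiodic_general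
    {A : Type} [Fintype A] [Nonempty A]
    (p : ℕ → A → ℝ) (pbar : A → ℝ)
    (hp_sum : ∀ n, ∑ a, p n a = 1)
    (hpbar_pos : ∀ a, 0 < pbar a) (hpbar_sum : ∑ a, pbar a = 1)
    (hconv : ∀ a, Tendsto (fun n => p n a) atTop (nhds (pbar a)))
    (L : Set (List A)) (hL : IsAperiodicLang L) :
    ∃ d : ℝ,
      Tendsto (fun n : ℕ => bernoulliLangMeasure pbar L n) atTop (nhds d) ∧
      Tendsto (fun n : ℕ => bernoulliLangMeasure (p n) L n) atTop (nhds d) := by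
  obtain ⟨M, _, _, φ, N, ⟨n, -, hap⟩, rfl⟩ := hL
  obtain ⟨a₀, ha₀⟩ := Finite.exists_min pbar
  have hδ (a : A) : pbar a₀ / 2 < pbar a := by linarith [hpbar_pos a₀, ha₀ a]
  have hp : Tendsto p atTop (𝓝[{q | (∀ a, pbar a₀ / 2 ≤ q a) ∧ ∑ a, q a = 1}] pbar) :=
    tendsto_nhdsWithin_iff.2 ⟨tendsto_pi_nhds.2 hconv,
      (eventually_all.2 fun a => (hconv a).eventually (eventually_ge_nhds (hδ a))).mono
        fun n hn => ⟨hn, hp_sum n⟩⟩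
  have hF := uniformCauchySeqOn_transitionMatrix_pow_mulVec (φ := φ) hap
    (half_pos (hpbar_pos a₀)) (v := N.indicator 1) (fun x => by by_cases hx : x ∈ N <;> simp [hx]) 1
  simp only [← bernoulliLangMeasure_eq_transitionMatrix_pow_mulVec] at hF
  exact hF.exists_tendsto_and_tendsto_comp
    (fun j => (continuous_bernoulliLangMeasure _ j).continuousOn)
    ⟨fun a => (hδ a).le, hpbar_sum⟩ hp

/-- Theorem: if `(p n)` is a sequence of probability vectors on a finite nonempty
alphabet `A` converging pointwise to a positive probability vector `pbar`, then for
every aperiodic language `L ⊆ A*` there is a real `d` which is both the strong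
density of `L` with respect to the Bernoulli measure of `pbar` and the strong
sequential density of `L` with respect to the sequence of Bernoulli measures. -/
theorem strongSequentialDensity_of_bernoulli_tendsto_positive_of_aperiodic
    {A : Type} [Fintype A] [Nonempty A]
    (p : ℕ → A → ℝ) (pbar : A → ℝ)
    (hp_nonneg : ∀ n a, 0 ≤ p n a) (hp_sum : ∀ n, ∑ a, p n a = 1)
    (hpbar_pos : ∀ a, 0 < pbar a) (hpbar_sum : ∑ a, pbar a = 1)
    (hconv : ∀ a, Tendsto (fun n => p n a) atTop (nhds (pbar a)))
    (L : Set (List A)) (hL : IsAperiodicLang L) :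
    ∃ d : ℝ,
      Tendsto (fun n : ℕ => bernoulliLangMeasure pbar L n) atTop (nhds d) ∧
      Tendsto (fun n : ℕ => bernoulliLangMeasure (p n) L n) atTop (nhds d) :=
  strongSequentialDensity_of_bernoulli_tendsto_positive_of_aperiodic_general p pbar hp_sum hpbar_pos
    hpbar_sum hconv L hL
end

section
/- Let A be a finite nonempty alphabet and consider the shift S on A^ℤ = (ℤ → A), (Sx)_k = x_{k+1}. Let (μ_n)_{n≥0} be a sequence of ergodic shift-invariant Borel probability measures converging in the strong sense to a Borel probability measure μ̄ (for every ε > 0 there is N with |μ_n(U) − μ̄(U)| ≤ ε for all n ≥ N and all Borel sets U). Then the sequence is eventually constant: there exists N such that μ_n = μ̄ for every n ≥ N. -/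
/-!
Two ergodic invariant probability measures `μ`, `ν` are equal or mutually singular: a set `S`
carrying `ν` on which the singular part of `μ` vanishes is invariant `μ`-a.e., so by
ergodicity of `μ` either `μ S = 0`, or `μ ≪ ν` and then ergodicity of `ν` forces `μ = ν`.
Mutually singular probability measures differ by `1` on some set, so once all `μ n` are
uniformly within `1/3` of `μbar` they coincide, and the common value is `μbar`.
-/

open MeasureTheory

/-- The shift map on `A^ℤ`. -/
def shiftMap {A : Type*} : (ℤ → A) → (ℤ → A) := fun x k => x (k + 1)

/-- A shift-invariant measure `μ` is ergodic if every Borel set invariant under the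
shift has measure `0` or `1`. -/
def IsErgodicShift {A : Type*} [MeasurableSpace A] (μ : Measure (ℤ → A)) : Prop :=
  ∀ U : Set (ℤ → A), MeasurableSet U → shiftMap ⁻¹' U = U → μ U = 0 ∨ μ U = 1

open Measure

namespace MeasureTheory

variable {X : Type*} {m : MeasurableSpace X} {μ ν : Measure X}

theorem MeasurePreserving.preimage_ae_eq_of_singularPart_null [IsFiniteMeasure μ]
    [IsFiniteMeasure ν] {f : X → X} (hfμ : MeasurePreserving f μ μ)
    (hfν : MeasurePreserving f ν ν) {S : Set X}
    (hμS : μ.singularPart ν S = 0) (hνS : ν Sᶜ = 0) : f ⁻¹' S =ᵐ[μ] S := by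
  have hac : μ ≪ μ.singularPart ν + ν := by
    conv_lhs => rw [haveLebesgueDecomposition_add μ ν]
    exact .add AbsolutelyContinuous.rfl (withDensity_absolutelyContinuous _ _)
  have hfs := hfμ.singularPart hfν
  refine hac.ae_le (ae_add_measure_iff.mpr ⟨?_, ?_⟩)
  · exact (ae_eq_empty.mpr (hfs.preimage_null hμS)).trans (ae_eq_empty.mpr hμS).symm
  · exact (ae_eq_univ.mpr (hfν.preimage_null hνS)).trans (ae_eq_univ.mpr hνS).symm

namespace Measure

theorem eq_of_forall_abs_toReal_sub_le [IsFiniteMeasure μ] [IsFiniteMeasure ν]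
    (h : ∀ ε > 0, ∀ s, MeasurableSet s → |(μ s).toReal - (ν s).toReal| ≤ ε) : μ = ν :=
  ext fun s hs => (ENNReal.toReal_eq_toReal_iff' (measure_ne_top μ s) (measure_ne_top ν s)).mp <|
    eq_of_abs_sub_le_all fun ε hε => h ε hε s hs

theorem MutuallySingular.exists_abs_toReal_sub_eq_one [IsProbabilityMeasure μ]
    [IsProbabilityMeasure ν] (h : μ ⟂ₘ ν) :
    ∃ s, MeasurableSet s ∧ |(μ s).toReal - (ν s).toReal| = 1 := by
  obtain ⟨s, hs, hμs, hνs⟩ := h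
  refine ⟨s, hs, ?_⟩
  rw [hμs, (prob_compl_eq_zero_iff hs).mp hνs]
  norm_num

end Measure

end MeasureTheory

namespace Ergodic

variable {X : Type*} {m : MeasurableSpace X} {μ ν : Measure X} {f : X → X}

theorem eq_or_mutuallySingular [IsProbabilityMeasure μ] [IsProbabilityMeasure ν]
    (hμ : Ergodic f μ) (hν : Ergodic f ν) : μ = ν ∨ μ ⟂ₘ ν := by
  obtain ⟨S, hSm, hμS, hνS⟩ := mutuallySingular_singularPart μ ν
  have hS : f ⁻¹' S =ᵐ[μ] S :=
    hμ.toMeasurePreserving.preimage_ae_eq_of_singularPart_null hν.toMeasurePreserving hμS hνS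
  rcases hμ.quasiErgodic.ae_empty_or_univ₀ hSm.nullMeasurableSet hS with hS0 | hS1
  · exact .inr ⟨S, hSm, ae_eq_empty.mp hS0, hνS⟩
  · refine .inl (hν.eq_of_absolutelyContinuous hμ.toMeasurePreserving ?_)
    rw [← singularPart_eq_zero, ← measure_univ_eq_zero]
    have hμSc : μ.singularPart ν Sᶜ = 0 :=
      absolutelyContinuous_of_le (singularPart_le μ ν) (ae_eq_univ.mp hS1)
    simpa [hμS, hμSc] using measure_univ_le_add_compl S (μ := μ.singularPart ν)

end Ergodic

section Shift

variable {A : Type*} [MeasurableSpace A]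

theorem measurable_shiftMap : Measurable (shiftMap : (ℤ → A) → (ℤ → A)) :=
  measurable_pi_lambda _ fun k => measurable_pi_apply (k + 1)

theorem IsErgodicShift.ergodic {μ : Measure (ℤ → A)} [IsProbabilityMeasure μ]
    (herg : IsErgodicShift μ) (hinv : μ.map shiftMap = μ) : Ergodic shiftMap μ where
  measurable := measurable_shiftMap
  map_eq := hinv
  aeconst_set _ hs hinvs := Filter.eventuallyConst_set'.mpr <|
    (herg _ hs hinvs).imp ae_eq_empty.mpr
      fun h => ae_eq_univ.mpr ((prob_compl_eq_zero_iff hs).mpr h)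

end Shift

theorem eventually_constant_of_ergodic_strong_convergence_general
    {A : Type} [MeasurableSpace A]
    (μ : ℕ → Measure (ℤ → A)) (μbar : Measure (ℤ → A))
    (hprob : ∀ n, IsProbabilityMeasure (μ n)) (hprobbar : IsProbabilityMeasure μbar)
    (hinv : ∀ n, (μ n).map shiftMap = μ n)
    (herg : ∀ n, IsErgodicShift (μ n))
    (hstrong : ∀ ε : ℝ, 0 < ε → ∃ N : ℕ, ∀ n ≥ N, ∀ U : Set (ℤ → A),
      MeasurableSet U → |((μ n) U).toReal - (μbar U).toReal| ≤ ε) :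
    ∃ N : ℕ, ∀ n ≥ N, μ n = μbar := by
  obtain ⟨N, hN⟩ := hstrong (1 / 3) (by norm_num)
  have hconst : ∀ n ≥ N, μ n = μ N := fun n hn => by
    refine (((herg n).ergodic (hinv n)).eq_or_mutuallySingular
      ((herg N).ergodic (hinv N))).resolve_right fun hsing => ?_
    obtain ⟨U, hU, hU1⟩ := hsing.exists_abs_toReal_sub_eq_one
    have htri := abs_sub_le ((μ n) U).toReal (μbar U).toReal ((μ N) U).toReal
    rw [abs_sub_comm (μbar U).toReal] at htri
    linarith [hN n hn U hU, hN N le_rfl U hU]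
  refine ⟨N, fun n hn => (hconst n hn).trans <|
    eq_of_forall_abs_toReal_sub_le fun ε hε U hU => ?_⟩
  obtain ⟨M, hM⟩ := hstrong ε hε
  simpa only [hconst _ (le_max_left N M)] using hM (max N M) (le_max_right N M) U hU

/-- Theorem: a sequence of ergodic shift-invariant Borel probability measures on
`A^ℤ` which converges in the strong sense to a probability measure `μbar` is
eventually constant equal to `μbar`. -/
theorem eventually_constant_of_ergodic_strong_convergence
    {A : Type} [Fintype A] [Nonempty A] [MeasurableSpace A] [MeasurableSingletonClass A]
    (μ : ℕ → Measure (ℤ → A)) (μbar : Measure (ℤ → A))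
    (hprob : ∀ n, IsProbabilityMeasure (μ n)) (hprobbar : IsProbabilityMeasure μbar)
    (hinv : ∀ n, (μ n).map shiftMap = μ n)
    (herg : ∀ n, IsErgodicShift (μ n))
    (hstrong : ∀ ε : ℝ, 0 < ε → ∃ N : ℕ, ∀ n ≥ N, ∀ U : Set (ℤ → A),
      MeasurableSet U → |((μ n) U).toReal - (μbar U).toReal| ≤ ε) :
    ∃ N : ℕ, ∀ n ≥ N, μ n = μbar :=
  eventually_constant_of_ergodic_strong_convergence_general μ μbar hprob hprobbar hinv herg hstrong
end

section
/- Let A be a finite nonempty alphabet and let X ⊆ A^ℤ be a shift space (a nonempty closed subset of A^ℤ = (ℤ → A) with S(X) = X, where (Sx)_k = x_{k+1}). For each i ≥ 0 let L_i(X) = {w ∈ A^i : w occurs as a block x_k⋯x_{k+i−1} of some x ∈ X}, and let L(X) = ∪_i L_i(X). For a word u ∈ A*, define the combinatorial density δ_X(uA*) = lim_{n→∞} (1/n) Σ_{i=0}^{n-1} card{w ∈ L_i(X) : u is a prefix of w} / card(L_i(X)), when the limit exists. Assume δ_X(uA*) exists for every u ∈ L(X). Then there exists a Borel probability measure μ on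 A^ℤ such that μ([u]) = δ_X(uA*) for every u ∈ L(X), where [u] = {x ∈ A^ℤ : x_0⋯x_{|u|−1} = u}. -/
open Filter MeasureTheory

/-- The word `u` occurs as a block of some element of `X ⊆ A^ℤ`. -/
def occursIn {A : Type*} (X : Set (ℤ → A)) (u : List A) : Prop :=
  ∃ x ∈ X, ∃ k : ℤ, ∀ j : Fin u.length, x (k + (j.val : ℤ)) = u.get j

/-- The `n`-th Cesàro average of the proportion, among the words of length `i` of
the language of `X`, of those having `v` as a prefix:
`(1/n) ∑_{i<n} card{w ∈ L_i(X) : v prefix of w} / card L_i(X)`. -/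
noncomputable def combAvg {A : Type*} (X : Set (ℤ → A)) (v : List A) (n : ℕ) : ℝ :=
  (1 / n : ℝ) * ∑ i ∈ Finset.range n,
    ({w : List A | w.length = i ∧ occursIn X w ∧ v <+: w}.ncard : ℝ) /
    ({w : List A | w.length = i ∧ occursIn X w}.ncard : ℝ)

/-!
Average over `i ≤ n` the uniform distributions on the words of length `i` of the language, each
word padded with a fixed letter into a point of `A^ℤ`. For `i ≥ |u|` a padded word lies in the
cylinder `[u]` exactly when `u` is a prefix of it, so the masses these averages give to `[u]`
differ from the combinatorial Cesàro averages only in finitely many terms and tend to `δ_X(uA*)`.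
Probability measures on the compact space `A^ℤ` form a weakly compact space and cylinders are
clopen, so a weak cluster point of the averages gives every cylinder this limit mass.
-/

open Topology Finset ENNReal

lemma exists_isProbabilityMeasure_real_eq_of_tendsto {Ω ι : Type*} [MeasurableSpace Ω]
    [TopologicalSpace Ω] [CompactSpace Ω] [T2Space Ω] [BorelSpace Ω] [HasOuterApproxClosed Ω]
    (L : Filter ι) [L.NeBot] (ν : ι → Measure Ω) [∀ i, IsProbabilityMeasure (ν i)] :
    ∃ μ : Measure Ω, IsProbabilityMeasure μ ∧ ∀ E, IsClopen E → ∀ c : ℝ,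
      Tendsto (fun i => (ν i).real E) L (𝓝 c) → μ.real E = c := by
  let P : ι → ProbabilityMeasure Ω := fun i => ⟨ν i, inferInstance⟩
  let μ : ProbabilityMeasure Ω := (Ultrafilter.map P (.of L)).lim
  have hPμ : Tendsto P (Ultrafilter.of L) (𝓝 μ) := Ultrafilter.le_nhds_lim _
  refine ⟨μ, inferInstance, fun E hE c hc =>
    tendsto_nhds_unique ?_ (hc.mono_left (Ultrafilter.of_le L))⟩
  exact (NNReal.continuous_coe.tendsto _).comp
    (ProbabilityMeasure.tendsto_measure_of_isClopen_of_tendsto hPμ hE)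

lemma tendsto_cesaro_of_eventuallyEq {f g : ℕ → ℝ} {l : ℝ} (hfg : f =ᶠ[atTop] g)
    (hg : Tendsto (fun n : ℕ => (n : ℝ)⁻¹ * ∑ i ∈ range n, g i) atTop (𝓝 l)) :
    Tendsto (fun n : ℕ => (n : ℝ)⁻¹ * ∑ i ∈ range n, f i) atTop (𝓝 l) := by
  have hdiff : Tendsto (f - g) atTop (𝓝 0) :=
    tendsto_const_nhds.congr' (hfg.mono fun i hi => by simp [hi])
  simpa [Finset.sum_sub_distrib, mul_sub] using hg.add hdiff.cesaro

section CesaroMeasure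

variable {Ω : Type*} [MeasurableSpace Ω]

noncomputable def cesaroMeasure (μ : ℕ → Measure Ω) (n : ℕ) : Measure Ω :=
  ((n + 1 : ℕ) : ℝ≥0∞)⁻¹ • ∑ i ∈ range (n + 1), μ i

instance isProbabilityMeasure_cesaroMeasure (μ : ℕ → Measure Ω)
    [∀ i, IsProbabilityMeasure (μ i)] (n : ℕ) : IsProbabilityMeasure (cesaroMeasure μ n) :=
  ⟨by simp [cesaroMeasure, ENNReal.inv_mul_cancel]⟩

lemma cesaroMeasure_real_apply (μ : ℕ → Measure Ω) [∀ i, IsFiniteMeasure (μ i)] (n : ℕ)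
    (s : Set Ω) :
    (cesaroMeasure μ n).real s =
      ((n + 1 : ℕ) : ℝ)⁻¹ * ∑ i ∈ range (n + 1), (μ i).real s := by
  simp [cesaroMeasure, measureReal_def, ENNReal.toReal_sum, measure_ne_top, ENNReal.toReal_add]

end CesaroMeasure

section Words

variable {A : Type*}

def wordCylinder (u : List A) : Set (ℤ → A) := {x | ∀ j : Fin u.length, x j = u.get j}

lemma isClopen_wordCylinder [TopologicalSpace A] [DiscreteTopology A] (u : List A) :
    IsClopen (wordCylinder u) := by
  have : wordCylinder u = ⋂ j : Fin u.length, (fun x : ℤ → A => x j) ⁻¹' {u.get j} := by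
    ext; simp [wordCylinder]
  rw [this]
  exact isClopen_iInter_of_finite fun j => (isClopen_discrete _).preimage (continuous_apply _)

def padWord (a : A) (w : List A) (k : ℤ) : A := w.getD k.toNat a

lemma padWord_mem_wordCylinder_iff (a : A) {u w : List A} (h : u.length ≤ w.length) :
    padWord a w ∈ wordCylinder u ↔ u <+: w := by
  simp only [wordCylinder, Set.mem_ofPred_eq, padWord, Int.toNat_natCast,
    List.prefix_iff_getElem, h, exists_true_left]
  constructor
  · intro H i hi
    simpa [List.getElem?_eq_getElem (hi.trans_le h)] using (H ⟨i, hi⟩).symm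
  · intro H j
    simp [List.getElem?_eq_getElem (j.2.trans_le h), H]

variable [Finite A]

lemma finite_setOf_length_eq_and_occursIn (X : Set (ℤ → A)) (i : ℕ) :
    {w : List A | w.length = i ∧ occursIn X w}.Finite :=
  (List.finite_length_eq A i).subset fun _ hw => hw.1

noncomputable def languageOfLength (X : Set (ℤ → A)) (i : ℕ) : Finset (List A) :=
  (finite_setOf_length_eq_and_occursIn X i).toFinset

lemma coe_languageOfLength (X : Set (ℤ → A)) (i : ℕ) :
    (languageOfLength X i : Set (List A)) = {w | w.length = i ∧ occursIn X w} :=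
  Set.Finite.coe_toFinset _

lemma mem_languageOfLength {X : Set (ℤ → A)} {i : ℕ} {w : List A} :
    w ∈ languageOfLength X i ↔ w.length = i ∧ occursIn X w :=
  Set.Finite.mem_toFinset _

lemma languageOfLength_nonempty {X : Set (ℤ → A)} (hX : X.Nonempty) (i : ℕ) :
    (languageOfLength X i).Nonempty := by
  obtain ⟨x, hx⟩ := hX
  exact ⟨List.ofFn fun j : Fin i => x j,
    mem_languageOfLength.mpr ⟨List.length_ofFn, x, hx, 0, fun j => by simp⟩⟩

open scoped Classical in
lemma combAvg_eq (X : Set (ℤ → A)) (u : List A) (n : ℕ) :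
    combAvg X u n = (n : ℝ)⁻¹ * ∑ i ∈ range n,
      (#{w ∈ languageOfLength X i | u <+: w} : ℝ) / #(languageOfLength X i) := by
  have hprefix (i : ℕ) : {w : List A | w.length = i ∧ occursIn X w ∧ u <+: w} =
      ↑{w ∈ languageOfLength X i | u <+: w} := by
    ext; simp [mem_languageOfLength, and_assoc]
  simp only [combAvg, one_div, hprefix, ← coe_languageOfLength, Set.ncard_coe_finset]

noncomputable def uniformPaddedWord (a : A) {X : Set (ℤ → A)} (hX : X.Nonempty) (i : ℕ) :
    PMF (ℤ → A) :=
  (PMF.uniformOfFinset (languageOfLength X i) (languageOfLength_nonempty hX i)).map (padWord a)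

open scoped Classical in
lemma uniformPaddedWord_toMeasure_real_apply [MeasurableSpace A] (a : A) {X : Set (ℤ → A)}
    (hX : X.Nonempty) (i : ℕ) {s : Set (ℤ → A)} (hs : MeasurableSet s) :
    (uniformPaddedWord a hX i).toMeasure.real s =
      (#{w ∈ languageOfLength X i | padWord a w ∈ s} : ℝ) / #(languageOfLength X i) := by
  rw [measureReal_def, PMF.toMeasure_apply_eq_toOuterMeasure_apply _ hs, uniformPaddedWord,
    PMF.toOuterMeasure_map_apply, PMF.toOuterMeasure_uniformOfFinset_apply, ENNReal.toReal_div]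
  simp

lemma tendsto_cesaroMeasure_real_wordCylinder [TopologicalSpace A] [DiscreteTopology A]
    [MeasurableSpace A] [BorelSpace A] (a : A) {X : Set (ℤ → A)} (hX : X.Nonempty) (u : List A)
    {c : ℝ} (hc : Tendsto (combAvg X u) atTop (𝓝 c)) :
    Tendsto (fun n => (cesaroMeasure (fun i => (uniformPaddedWord a hX i).toMeasure) n).real
      (wordCylinder u)) atTop (𝓝 c) := by
  classical
  have hmeas : MeasurableSet (wordCylinder u) := (isClopen_wordCylinder u).isOpen.measurableSet
  simp_rw [cesaroMeasure_real_apply, uniformPaddedWord_toMeasure_real_apply a hX _ hmeas]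
  rw [funext (combAvg_eq X u)] at hc
  refine (tendsto_cesaro_of_eventuallyEq ?_ hc).comp (tendsto_add_atTop_nat 1)
  filter_upwards [eventually_ge_atTop u.length] with i hi
  congr 3
  refine Finset.filter_congr fun w hw => padWord_mem_wordCylinder_iff a ?_
  rw [(mem_languageOfLength.mp hw).1]
  exact hi

end Words

theorem exists_measure_of_combinatorialDensity_general
    {A : Type} [Fintype A]
    [TopologicalSpace A] [DiscreteTopology A] [MeasurableSpace A] [BorelSpace A]
    (X : Set (ℤ → A)) (hXne : X.Nonempty)
    (d : List A → ℝ)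
    (hd : ∀ u : List A, occursIn X u → Tendsto (combAvg X u) atTop (nhds (d u))) :
    ∃ μ : Measure (ℤ → A), IsProbabilityMeasure μ ∧
      ∀ u : List A, occursIn X u →
        (μ {x : ℤ → A | ∀ j : Fin u.length, x (j.val : ℤ) = u.get j}).toReal = d u := by
  obtain ⟨μ, hμ, hlim⟩ := exists_isProbabilityMeasure_real_eq_of_tendsto atTop
    (cesaroMeasure fun i => (uniformPaddedWord (hXne.some 0) hXne i).toMeasure)
  exact ⟨μ, hμ, fun u hu => hlim _ (isClopen_wordCylinder u) _
    (tendsto_cesaroMeasure_real_wordCylinder _ hXne u (hd u hu))⟩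

/-- Theorem: let `X` be a shift space such that the combinatorial density
`δ_X (u A*)` exists for every `u ∈ L(X)`. Then there is a Borel probability
measure `μ` on `A^ℤ` such that `μ [u] = δ_X (u A*)` for every `u ∈ L(X)`. -/
theorem exists_measure_of_combinatorialDensity
    {A : Type} [Fintype A] [Nonempty A]
    [TopologicalSpace A] [DiscreteTopology A] [MeasurableSpace A] [BorelSpace A]
    (X : Set (ℤ → A)) (hXne : X.Nonempty) (hXclosed : IsClosed X)
    (hXinv : shiftMap '' X = X)
    (d : List A → ℝ)
    (hd : ∀ u : List A, occursIn X u → Tendsto (combAvg X u) atTop (nhds (d u))) :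
    ∃ μ : Measure (ℤ → A), IsProbabilityMeasure μ ∧
      ∀ u : List A, occursIn X u →
        (μ {x : ℤ → A | ∀ j : Fin u.length, x (j.val : ℤ) = u.get j}).toReal = d u :=
  exists_measure_of_combinatorialDensity_general X hXne d hd
end
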